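/- For every integer n ≥ 2 and every d ∈ [0, π), the cost function c_n(d) := n − sin^{n-1}(d)/S_n(d)^{n-1} − (n−1)·S_n(d)/tan(d) is nonnegative (with the value at d = 0 interpreted as the limit, equal to 0). -/

import Mathlib

open Real Filter

noncomputable def Sn (n : ℕ) (d : ℝ) : ℝ :=
  ((n : ℝ) * ∫ s in (0:ℝ)..d, Real.sin s ^ (n - 1)) ^ ((1 : ℝ) / n)

noncomputable def cn (n : ℕ) (d : ℝ) : ℝ :=
  (n : ℝ) - Real.sin d ^ (n - 1) / Sn n d ^ (n - 1) - ((n : ℝ) - 1) * Sn n d / Real.tan d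

/-!
Write `t = sin d / S_n(d)`, so that `c_n(d) = n - t^(n-1) - (n-1) cos d / t`. Comparing derivatives
from `0` gives `sin^n d ≤ n ∫₀^d sin^(n-1) ≤ (sin d / √(cos d))^n`, the second inequality for
`d < π/2` because `sin / √cos` has derivative at least `1`. Hence `cos d ≤ t^2 ≤ t ≤ 1`, so that
`cos d / t ≤ 1` and `c_n(d) ≥ n - 1 - (n-1) = 0`, while for small `d` also
`c_n(d) ≤ n - cos^(n-1) d - (n-1) cos d → 0`.
-/

open Set Topology

theorem le_of_hasDerivAt_le_of_le {f f' g g' : ℝ → ℝ} {a b : ℝ} (hab : a ≤ b)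
    (hf : ∀ x ∈ Icc a b, HasDerivAt f (f' x) x) (hg : ∀ x ∈ Icc a b, HasDerivAt g (g' x) x)
    (ha : f a ≤ g a) (hderiv : ∀ x ∈ Ico a b, f' x ≤ g' x) : f b ≤ g b :=
  image_le_of_deriv_right_le_deriv_boundary
    (fun x hx => (hf x hx).continuousAt.continuousWithinAt)
    (fun x hx => (hf x (Ico_subset_Icc_self hx)).hasDerivWithinAt) ha
    (fun x hx => (hg x hx).continuousAt.continuousWithinAt)
    (fun x hx => (hg x (Ico_subset_Icc_self hx)).hasDerivWithinAt) hderiv ⟨hab, le_rfl⟩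

theorem hasDerivAt_mul_integral_sin_pow (n : ℕ) (x : ℝ) :
    HasDerivAt (fun d => (n : ℝ) * ∫ s in (0:ℝ)..d, sin s ^ (n - 1))
      (n * sin x ^ (n - 1)) x := by
  have hcont : Continuous fun s => sin s ^ (n - 1) := continuous_sin.pow _
  exact (intervalIntegral.integral_hasDerivAt_right (hcont.intervalIntegrable _ _)
    hcont.aestronglyMeasurable.stronglyMeasurableAtFilter hcont.continuousAt).const_mul _

theorem sin_pow_le_mul_integral_sin_pow {n : ℕ} (hn : 1 ≤ n) {d : ℝ} (hd₀ : 0 ≤ d)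
    (hdπ : d ≤ π) : sin d ^ n ≤ n * ∫ s in (0:ℝ)..d, sin s ^ (n - 1) := by
  refine le_of_hasDerivAt_le_of_le (f := fun x => sin x ^ n) hd₀
    (fun x _ => (hasDerivAt_sin x).pow n) (fun x _ => hasDerivAt_mul_integral_sin_pow n x)
    (by simp [zero_pow (by omega : n ≠ 0)]) fun x hx => ?_
  have hsin : 0 ≤ sin x := sin_nonneg_of_nonneg_of_le_pi hx.1 (hx.2.le.trans hdπ)
  have : 0 ≤ (n : ℝ) * sin x ^ (n - 1) := by positivity
  nlinarith [cos_le_one x]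

theorem hasDerivAt_sin_div_sqrt_cos {x : ℝ} (hx : 0 < cos x) :
    HasDerivAt (fun y => sin y / √(cos y)) (√(cos x) + sin x ^ 2 / (2 * √(cos x) ^ 3)) x := by
  have hr : 0 < √(cos x) := sqrt_pos.2 hx
  refine ((hasDerivAt_sin x).fun_div ((hasDerivAt_cos x).sqrt hx.ne') hr.ne').congr_deriv ?_
  nth_rw 1 [← sq_sqrt hx.le]
  field_simp
  ring

theorem one_le_sqrt_cos_add_sin_sq_div {x : ℝ} (hx : 0 < cos x) :
    1 ≤ √(cos x) + sin x ^ 2 / (2 * √(cos x) ^ 3) := by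
  have hr₀ : 0 < √(cos x) := sqrt_pos.2 hx
  have hr₁ : √(cos x) ≤ 1 := sqrt_le_one.2 (cos_le_one x)
  have hrs : √(cos x) ^ 4 + sin x ^ 2 = 1 := by
    rw [show √(cos x) ^ 4 = (√(cos x) ^ 2) ^ 2 by ring, sq_sqrt hx.le, add_comm, sin_sq_add_cos_sq]
  rw [← sub_le_iff_le_add', le_div_iff₀ (by positivity)]
  nlinarith [mul_nonneg (sub_nonneg.2 hr₁) (sq_nonneg √(cos x)),
    mul_nonneg (sub_nonneg.2 hr₁) hr₀.le, pow_le_one₀ hr₀.le hr₁ (n := 3)]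

theorem mul_integral_sin_pow_le {n : ℕ} {d : ℝ} (hd₀ : 0 ≤ d) (hd : d < π / 2) :
    n * ∫ s in (0:ℝ)..d, sin s ^ (n - 1) ≤ (sin d / √(cos d)) ^ n := by
  have hcos : ∀ x ∈ Icc 0 d, 0 < cos x := fun x hx =>
    cos_pos_of_mem_Ioo ⟨by linarith [hx.1, pi_pos], hx.2.trans_lt hd⟩
  refine le_of_hasDerivAt_le_of_le hd₀ (fun x _ => hasDerivAt_mul_integral_sin_pow n x)
    (fun x hx => (hasDerivAt_sin_div_sqrt_cos (hcos x hx)).pow n) (by simp) fun x hx => ?_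
  have hc := hcos x (Ico_subset_Icc_self hx)
  have hr : 0 < √(cos x) := sqrt_pos.2 hc
  have hsin : 0 ≤ sin x := sin_nonneg_of_nonneg_of_le_pi hx.1 (by linarith [hx.2, pi_pos])
  have hsin_le : sin x ≤ sin x / √(cos x) :=
    (le_div_iff₀ hr).2 (mul_le_of_le_one_right hsin (sqrt_le_one.2 (cos_le_one x)))
  calc (n : ℝ) * sin x ^ (n - 1) ≤ n * (sin x / √(cos x)) ^ (n - 1) := by gcongr
    _ ≤ n * (sin x / √(cos x)) ^ (n - 1) * (√(cos x) + sin x ^ 2 / (2 * √(cos x) ^ 3)) :=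
      le_mul_of_one_le_right (by positivity) (one_le_sqrt_cos_add_sin_sq_div hc)

theorem Sn_pow {n : ℕ} (hn : n ≠ 0) {d : ℝ} (h : 0 ≤ (n : ℝ) * ∫ s in (0:ℝ)..d, sin s ^ (n - 1)) :
    Sn n d ^ n = n * ∫ s in (0:ℝ)..d, sin s ^ (n - 1) := by
  rw [Sn, one_div, rpow_inv_natCast_pow h hn]

theorem sin_le_Sn {n : ℕ} (hn : 1 ≤ n) {d : ℝ} (hd₀ : 0 ≤ d) (hdπ : d ≤ π) : sin d ≤ Sn n d := by
  have hsin : 0 ≤ sin d := sin_nonneg_of_nonneg_of_le_pi hd₀ hdπ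
  have h := sin_pow_le_mul_integral_sin_pow hn hd₀ hdπ
  have hI := (pow_nonneg hsin n).trans h
  refine le_of_pow_le_pow_left₀ (n := n) (by omega) (rpow_nonneg hI _) ?_
  rwa [Sn_pow (by omega) hI]

theorem Sn_mul_sqrt_cos_le {n : ℕ} (hn : 1 ≤ n) {d : ℝ} (hd₀ : 0 ≤ d) (hd : d < π / 2) :
    Sn n d * √(cos d) ≤ sin d := by
  have hr : 0 < √(cos d) := sqrt_pos.2 (cos_pos_of_mem_Ioo ⟨by linarith [pi_pos], hd⟩)
  have hsin : 0 ≤ sin d := sin_nonneg_of_nonneg_of_le_pi hd₀ (by linarith [pi_pos])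
  have hI := (pow_nonneg hsin n).trans
    (sin_pow_le_mul_integral_sin_pow hn hd₀ (by linarith [pi_pos]))
  have h : Sn n d ^ n ≤ (sin d / √(cos d)) ^ n := by
    rw [Sn_pow (by omega) hI]
    exact mul_integral_sin_pow_le hd₀ hd
  exact (le_div_iff₀ hr).1 (le_of_pow_le_pow_left₀ (n := n) (by omega) (by positivity) h)

theorem cos_le_sq_sin_div_Sn {n : ℕ} (hn : 1 ≤ n) {d : ℝ} (hd : d ∈ Ioo 0 π) :
    cos d ≤ (sin d / Sn n d) ^ 2 := by
  rcases le_or_gt (cos d) 0 with hc | hc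
  · exact hc.trans (sq_nonneg _)
  have hd' : d < π / 2 :=
    lt_of_not_ge fun h => hc.not_ge (cos_nonpos_of_pi_div_two_le_of_le h (by linarith [hd.2]))
  have hS : 0 < Sn n d :=
    (sin_pos_of_pos_of_lt_pi hd.1 hd.2).trans_le (sin_le_Sn hn hd.1.le hd.2.le)
  calc cos d = √(cos d) ^ 2 := (sq_sqrt hc.le).symm
    _ ≤ (sin d / Sn n d) ^ 2 := by
      gcongr
      rw [le_div_iff₀ hS, mul_comm]
      exact Sn_mul_sqrt_cos_le hn hd.1.le hd'

theorem sin_div_Sn_mem_Ioc {n : ℕ} (hn : 1 ≤ n) {d : ℝ} (hd : d ∈ Ioo 0 π) :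
    sin d / Sn n d ∈ Ioc 0 1 := by
  have hsin := sin_pos_of_pos_of_lt_pi hd.1 hd.2
  have hS := sin_le_Sn hn hd.1.le hd.2.le
  exact ⟨div_pos hsin (hsin.trans_le hS), (div_le_one₀ (hsin.trans_le hS)).2 hS⟩

noncomputable def costOfRatio (n : ℕ) (t c : ℝ) : ℝ := n - t ^ (n - 1) - (n - 1) * (c / t)

theorem cn_eq_costOfRatio (n : ℕ) (d : ℝ) : cn n d = costOfRatio n (sin d / Sn n d) (cos d) := by
  rw [cn, costOfRatio, tan_eq_sin_div_cos, div_pow, div_div_eq_mul_div, div_div_eq_mul_div]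
  ring

section costOfRatio

variable {n : ℕ} {t c : ℝ}

theorem costOfRatio_nonneg (hn : 1 ≤ n) (ht₀ : 0 < t) (ht₁ : t ≤ 1) (hc : c ≤ t ^ 2) :
    0 ≤ costOfRatio n t c := by
  have hn' : (0 : ℝ) ≤ n - 1 := sub_nonneg.2 (by exact_mod_cast hn)
  have hpow : t ^ (n - 1) ≤ 1 := pow_le_one₀ ht₀.le ht₁
  have hct : c / t ≤ 1 := (div_le_one ht₀).2 (hc.trans (pow_le_of_le_one ht₀.le ht₁ two_ne_zero))
  have := mul_le_of_le_one_right hn' hct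
  rw [costOfRatio]
  linarith

theorem costOfRatio_le (hn : 1 ≤ n) (ht₀ : 0 < t) (ht₁ : t ≤ 1) (hc₀ : 0 ≤ c) (hc : c ≤ t ^ 2) :
    costOfRatio n t c ≤ n - c ^ (n - 1) - (n - 1) * c := by
  have hn' : (0 : ℝ) ≤ n - 1 := sub_nonneg.2 (by exact_mod_cast hn)
  have hpow : c ^ (n - 1) ≤ t ^ (n - 1) :=
    pow_le_pow_left₀ hc₀ (hc.trans (pow_le_of_le_one ht₀.le ht₁ two_ne_zero)) _
  have hct : c ≤ c / t := (le_div_iff₀ ht₀).2 (mul_le_of_le_one_right hc₀ ht₁)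
  have := mul_le_mul_of_nonneg_left hct hn'
  rw [costOfRatio]
  linarith

end costOfRatio

theorem cn_nonneg {n : ℕ} (hn : 1 ≤ n) {d : ℝ} (hd : d ∈ Ioo 0 π) : 0 ≤ cn n d := by
  obtain ⟨ht₀, ht₁⟩ := sin_div_Sn_mem_Ioc hn hd
  rw [cn_eq_costOfRatio]
  exact costOfRatio_nonneg hn ht₀ ht₁ (cos_le_sq_sin_div_Sn hn hd)

theorem cn_le {n : ℕ} (hn : 1 ≤ n) {d : ℝ} (hd : d ∈ Ioo 0 (π / 2)) :
    cn n d ≤ n - cos d ^ (n - 1) - (n - 1) * cos d := by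
  have hdπ : d ∈ Ioo 0 π := ⟨hd.1, hd.2.trans (half_lt_self pi_pos)⟩
  obtain ⟨ht₀, ht₁⟩ := sin_div_Sn_mem_Ioc hn hdπ
  rw [cn_eq_costOfRatio]
  exact costOfRatio_le hn ht₀ ht₁ (cos_nonneg_of_mem_Icc ⟨by linarith [hd.1, pi_pos], hd.2.le⟩)
    (cos_le_sq_sin_div_Sn hn hdπ)

theorem stmt_2 (n : ℕ) (hn : 2 ≤ n) :
    (∀ d ∈ Set.Ioo (0:ℝ) Real.pi, 0 ≤ cn n d) ∧
    Tendsto (cn n) (nhdsWithin 0 (Set.Ioi 0)) (nhds 0) := by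
  have hn₁ : 1 ≤ n := one_le_two.trans hn
  refine ⟨fun d hd => cn_nonneg hn₁ hd, ?_⟩
  have hbound : Tendsto (fun d => (n : ℝ) - cos d ^ (n - 1) - (n - 1) * cos d) (𝓝[>] 0) (𝓝 0) := by
    have hcont : Continuous fun d => (n : ℝ) - cos d ^ (n - 1) - (n - 1) * cos d := by fun_prop
    simpa using (hcont.tendsto 0).mono_left nhdsWithin_le_nhds
  have hIoo : Ioo 0 (π / 2) ∈ 𝓝[>] (0 : ℝ) := Ioo_mem_nhdsGT (by positivity)
  refine tendsto_of_tendsto_of_tendsto_of_le_of_le' tendsto_const_nhds hbound ?_ ?_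
  · filter_upwards [hIoo] with d hd using cn_nonneg hn₁ ⟨hd.1, hd.2.trans (half_lt_self pi_pos)⟩
  · filter_upwards [hIoo] with d hd using cn_le hn₁ hd
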